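/- Fix 0 < h < 1 and set n₀ = ⌊2/h⌋. For every integer n with 1 ≤ n ≤ (n₀+1)², every connected subset A of ℤ² with n points satisfies P(A) − h·n ≥ 2, where P(A) is the perimeter of A. -/
import Mathlib

/-- The four nearest neighbors of a site of `ℤ²` (Euclidean distance 1). -/
def nbrs (x : ℤ × ℤ) : Finset (ℤ × ℤ) :=
  {(x.1 + 1, x.2), (x.1 - 1, x.2), (x.1, x.2 + 1), (x.1, x.2 - 1)}

/-- The (edge) perimeter of a finite subset `A` of `ℤ²`. -/
def perim (A : Finset (ℤ × ℤ)) : ℕ :=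
  ∑ x ∈ A, ((nbrs x).filter (fun y => y ∉ A)).card

/-- `A ⊂ ℤ²` is connected with respect to nearest-neighbor adjacency. -/
def Conn (A : Finset (ℤ × ℤ)) : Prop :=
  ∀ x ∈ A, ∀ y ∈ A, Relation.ReflTransGen (fun u v => u ∈ A ∧ v ∈ A ∧ v ∈ nbrs u) x y

lemma card_filter_nbrs (x : ℤ × ℤ) (p : ℤ × ℤ → Prop) [DecidablePred p] :
    ((nbrs x).filter p).card =
      (if p (x.1 + 1, x.2) then 1 else 0) + (if p (x.1 - 1, x.2) then 1 else 0)
      + (if p (x.1, x.2 + 1) then 1 else 0) + (if p (x.1, x.2 - 1) then 1 else 0) := by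
  obtain ⟨a, b⟩ := x
  have h12 : ((a:ℤ)+1, b) ≠ (a-1, b) := by simp [Prod.ext_iff]; omega
  have h13 : ((a:ℤ)+1, b) ≠ (a, b+1) := by simp [Prod.ext_iff]
  have h14 : ((a:ℤ)+1, b) ≠ (a, b-1) := by simp [Prod.ext_iff]
  have h23 : ((a:ℤ)-1, b) ≠ (a, b+1) := by simp [Prod.ext_iff]
  have h24 : ((a:ℤ)-1, b) ≠ (a, b-1) := by simp [Prod.ext_iff]
  have h34 : ((a:ℤ), b+1) ≠ (a, b-1) := by simp [Prod.ext_iff]; omega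
  simp only [nbrs]
  rw [Finset.filter_insert, Finset.filter_insert, Finset.filter_insert, Finset.filter_singleton]
  split_ifs <;>
    simp_all [Finset.card_insert_of_notMem, Finset.mem_insert, Finset.mem_singleton]

lemma perim_eq (A : Finset (ℤ × ℤ)) :
    perim A = (A.filter fun x => (x.1 + 1, x.2) ∉ A).card
      + (A.filter fun x => (x.1 - 1, x.2) ∉ A).card
      + (A.filter fun x => (x.1, x.2 + 1) ∉ A).card
      + (A.filter fun x => (x.1, x.2 - 1) ∉ A).card := by
  unfold perim
  rw [Finset.card_filter, Finset.card_filter, Finset.card_filter, Finset.card_filter,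
    ← Finset.sum_add_distrib, ← Finset.sum_add_distrib, ← Finset.sum_add_distrib]
  exact Finset.sum_congr rfl fun x _ => card_filter_nbrs x _

lemma cols_le_up (A : Finset (ℤ × ℤ)) :
    (A.image Prod.fst).card ≤ (A.filter fun x => (x.1, x.2 + 1) ∉ A).card := by
  refine le_trans (Finset.card_le_card
    (t := ((A.filter fun x => (x.1, x.2 + 1) ∉ A).image Prod.fst)) ?_) Finset.card_image_le
  intro c hc
  obtain ⟨x0, hx0, rfl⟩ := Finset.mem_image.mp hc
  have hne : (A.filter fun x => x.1 = x0.1).Nonempty :=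
    ⟨x0, Finset.mem_filter.mpr ⟨hx0, rfl⟩⟩
  obtain ⟨b, hb, hmax⟩ := Finset.exists_max_image _ (fun x => x.2) hne
  obtain ⟨hbA, hbc⟩ := Finset.mem_filter.mp hb
  refine Finset.mem_image.mpr ⟨b, Finset.mem_filter.mpr ⟨hbA, ?_⟩, hbc⟩
  intro hmem
  have : b.2 + 1 ≤ b.2 := hmax _ (Finset.mem_filter.mpr ⟨hmem, hbc⟩)
  omega

lemma cols_le_down (A : Finset (ℤ × ℤ)) :
    (A.image Prod.fst).card ≤ (A.filter fun x => (x.1, x.2 - 1) ∉ A).card := by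
  refine le_trans (Finset.card_le_card
    (t := ((A.filter fun x => (x.1, x.2 - 1) ∉ A).image Prod.fst)) ?_) Finset.card_image_le
  intro c hc
  obtain ⟨x0, hx0, rfl⟩ := Finset.mem_image.mp hc
  have hne : (A.filter fun x => x.1 = x0.1).Nonempty :=
    ⟨x0, Finset.mem_filter.mpr ⟨hx0, rfl⟩⟩
  obtain ⟨b, hb, hmin⟩ := Finset.exists_min_image _ (fun x => x.2) hne
  obtain ⟨hbA, hbc⟩ := Finset.mem_filter.mp hb
  refine Finset.mem_image.mpr ⟨b, Finset.mem_filter.mpr ⟨hbA, ?_⟩, hbc⟩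
  intro hmem
  have : b.2 ≤ b.2 - 1 := hmin _ (Finset.mem_filter.mpr ⟨hmem, hbc⟩)
  omega

lemma rows_le_right (A : Finset (ℤ × ℤ)) :
    (A.image Prod.snd).card ≤ (A.filter fun x => (x.1 + 1, x.2) ∉ A).card := by
  refine le_trans (Finset.card_le_card
    (t := ((A.filter fun x => (x.1 + 1, x.2) ∉ A).image Prod.snd)) ?_) Finset.card_image_le
  intro r hr
  obtain ⟨x0, hx0, rfl⟩ := Finset.mem_image.mp hr
  have hne : (A.filter fun x => x.2 = x0.2).Nonempty :=
    ⟨x0, Finset.mem_filter.mpr ⟨hx0, rfl⟩⟩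
  obtain ⟨b, hb, hmax⟩ := Finset.exists_max_image _ (fun x => x.1) hne
  obtain ⟨hbA, hbc⟩ := Finset.mem_filter.mp hb
  refine Finset.mem_image.mpr ⟨b, Finset.mem_filter.mpr ⟨hbA, ?_⟩, hbc⟩
  intro hmem
  have : b.1 + 1 ≤ b.1 := hmax _ (Finset.mem_filter.mpr ⟨hmem, hbc⟩)
  omega

lemma rows_le_left (A : Finset (ℤ × ℤ)) :
    (A.image Prod.snd).card ≤ (A.filter fun x => (x.1 - 1, x.2) ∉ A).card := by
  refine le_trans (Finset.card_le_card
    (t := ((A.filter fun x => (x.1 - 1, x.2) ∉ A).image Prod.snd)) ?_) Finset.card_image_le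
  intro r hr
  obtain ⟨x0, hx0, rfl⟩ := Finset.mem_image.mp hr
  have hne : (A.filter fun x => x.2 = x0.2).Nonempty :=
    ⟨x0, Finset.mem_filter.mpr ⟨hx0, rfl⟩⟩
  obtain ⟨b, hb, hmin⟩ := Finset.exists_min_image _ (fun x => x.1) hne
  obtain ⟨hbA, hbc⟩ := Finset.mem_filter.mp hb
  refine Finset.mem_image.mpr ⟨b, Finset.mem_filter.mpr ⟨hbA, ?_⟩, hbc⟩
  intro hmem
  have : b.1 ≤ b.1 - 1 := hmin _ (Finset.mem_filter.mpr ⟨hmem, hbc⟩)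
  omega

/-- The perimeter is at least twice the number of occupied columns plus
twice the number of occupied rows. -/
lemma perim_ge (A : Finset (ℤ × ℤ)) :
    2 * (A.image Prod.fst).card + 2 * (A.image Prod.snd).card ≤ perim A := by
  rw [perim_eq]
  have h1 := cols_le_up A
  have h2 := cols_le_down A
  have h3 := rows_le_right A
  have h4 := rows_le_left A
  omega

set_option maxHeartbeats 1000000 in
/-- For `0 < h < 1`, `n₀ = ⌊2/h⌋`, and every connected subset `A` of `ℤ²` with
`1 ≤ n ≤ (n₀+1)²` points: `P(A) - h·n ≥ 2`. -/
theorem perim_sub_field_ge_two (h : ℝ) (h0 : 0 < h) (h1 : h < 1) (n₀ : ℕ)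
    (hn₀ : n₀ = ⌊2 / h⌋₊) (n : ℕ) (hn : 1 ≤ n) (hn' : n ≤ (n₀ + 1) ^ 2)
    (A : Finset (ℤ × ℤ)) (hcard : A.card = n) (hconn : Conn A) :
    2 ≤ (perim A : ℝ) - h * n := by
  -- facts about n₀
  have hm2 : h * n₀ ≤ 2 := by
    have : (n₀ : ℝ) ≤ 2 / h := hn₀ ▸ Nat.floor_le (by positivity)
    calc h * n₀ ≤ h * (2 / h) := by nlinarith
      _ = 2 := by field_simp
  have hm : 2 ≤ n₀ := by
    rw [hn₀]
    apply Nat.le_floor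
    rw [le_div_iff₀ h0]
    push_cast
    nlinarith
  set C := (A.image Prod.fst).card with hC
  set R := (A.image Prod.snd).card with hR
  have hAne : A.Nonempty := Finset.card_pos.mp (by omega)
  have hC1 : 1 ≤ C := Finset.card_pos.mpr (hAne.image _)
  have hR1 : 1 ≤ R := Finset.card_pos.mpr (hAne.image _)
  have hnCR : n ≤ C * R := by
    rw [← hcard]
    calc A.card ≤ ((A.image Prod.fst) ×ˢ (A.image Prod.snd)).card :=
          Finset.card_le_card Finset.subset_product
      _ = C * R := Finset.card_product _ _
  have hperim : 2 * C + 2 * R ≤ perim A := perim_ge A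
  -- pass to the reals
  have hperimR : 2 * (C : ℝ) + 2 * R ≤ (perim A : ℝ) := by exact_mod_cast hperim
  have hnCRR : (n : ℝ) ≤ (C : ℝ) * R := by exact_mod_cast hnCR
  have hC1R : (1 : ℝ) ≤ C := by exact_mod_cast hC1
  have hR1R : (1 : ℝ) ≤ R := by exact_mod_cast hR1
  have hmR : (2 : ℝ) ≤ n₀ := by exact_mod_cast hm
  rw [le_sub_iff_add_le]
  suffices hs : 2 + h * n ≤ 2 * (C : ℝ) + 2 * R by linarith
  by_cases hbig : 2 * (n₀ + 1) ≤ C + R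
  · -- many rows+columns: use n ≤ (n₀+1)²
    have hbigR : 2 * ((n₀ : ℝ) + 1) ≤ (C : ℝ) + R := by exact_mod_cast hbig
    have hn'R : (n : ℝ) ≤ ((n₀ : ℝ) + 1) ^ 2 := by exact_mod_cast hn'
    nlinarith [mul_nonneg h0.le (Nat.cast_nonneg n₀ : (0:ℝ) ≤ n₀),
      mul_le_mul_of_nonneg_left hn'R h0.le,
      mul_le_mul_of_nonneg_right hm2 (Nat.cast_nonneg n₀ : (0:ℝ) ≤ n₀)]
  · push_neg at hbig
    have hsmall : C + R ≤ 2 * n₀ + 1 := by omega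
    by_cases h11 : C = 1 ∧ R = 1
    · -- single point
      have : n ≤ 1 := by rw [h11.1, h11.2, mul_one] at hnCR; exact hnCR
      have : n = 1 := le_antisymm this hn
      rw [this, h11.1, h11.2]
      push_cast
      linarith
    · -- at least two points: use n ≤ C·R and (C+R-1)² ≥ 2·C·R
      have hCR2 : 2 ≤ C * R := by
        rcases Nat.lt_or_ge C 2 with hc | hc
        · have hc1 : C = 1 := by omega
          have : 2 ≤ R := by
            rcases Nat.lt_or_ge R 2 with hr | hr
            · exact absurd ⟨hc1, by omega⟩ h11
            · exact hr
          calc 2 ≤ R := this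
            _ ≤ C * R := Nat.le_mul_of_pos_left R (by omega)
        · calc 2 ≤ C := hc
            _ ≤ C * R := Nat.le_mul_of_pos_right _ (by omega)
      have hkey : 2 * (C : ℝ) * R + 2 * ((C : ℝ) + R) ≤ ((C : ℝ) + R) ^ 2 + 1 := by
        -- (C-1)² + (R-1)² ≥ 1 since not both are 1
        have : 2 ≤ C ∨ 2 ≤ R := by
          by_contra hcon
          push_neg at hcon
          exact h11 ⟨by omega, by omega⟩
        rcases this with hc | hc
        · have : (2 : ℝ) ≤ C := by exact_mod_cast hc
          nlinarith [sq_nonneg ((C : ℝ) - R)]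
        · have : (2 : ℝ) ≤ R := by exact_mod_cast hc
          nlinarith [sq_nonneg ((C : ℝ) - R)]
      have hsmallR : (C : ℝ) + R ≤ 2 * n₀ + 1 := by exact_mod_cast hsmall
      have h2m : (C : ℝ) + R - 1 ≤ 2 * n₀ := by linarith
      have hmpos : (0 : ℝ) < n₀ := by linarith
      have hhn : h * n ≤ h * ((C : ℝ) * R) := mul_le_mul_of_nonneg_left hnCRR h0.le
      have P1 : 0 ≤ (2 * (n₀ : ℝ) - ((C : ℝ) + R - 1)) * ((C : ℝ) + R - 1) :=
        mul_nonneg (by linarith) (by linarith)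
      have P2 : 0 ≤ (2 - h * n₀) * ((C : ℝ) * R) :=
        mul_nonneg (by linarith) (by positivity)
      nlinarith [P1, P2, hhn, hmpos, hkey]
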